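/- arXiv:1210.4350 — 2 statements merged into one kernel-verified Lean document; each statement's English description precedes it below -/
import Mathlib

section
/- Let q be continuous on [−1,1], s ∈ ℂ with t = Im s, and φ the solution of −u'' + qu = s²u with φ(−1) = α₂ ≠ 0, φ'(−1) = −α₁. Then there exist constants C, S₀ > 0 such that for all |s| ≥ S₀ and all x ∈ [−1,1]: |φ(x) − α₂ cos(s(x+1))| ≤ C·|s|⁻¹·e^{|t|(x+1)}. -/
/-!
Energy method. If `u'' = w - s²u`, the energy `E = ‖s‖²‖u‖² + ‖u'‖²` has
`E' = -4 Im s · Im (conj (s u) u') + 2⟪u', w⟫ ≤ (2|Im s| + 1) E + ‖w‖² - ‖s‖²‖u‖²`,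
and a Grönwall argument bounds `E`. For `w = qφ` and `‖s‖ ≥ sup |q|` this gives
`‖φ‖² ≲ exp((2|Im s| + 1)(x + 1))`. The difference `f = φ - α₂ cos(s(x + 1))` solves
`f'' = qφ - s²f` with `f(-1) = 0`, so the same argument, now with the forcing `‖qφ‖²` of
the size just obtained, gives `‖s‖²‖f‖² ≲ exp((2|Im s| + 1)(x + 1))`.
-/

open Complex Set
open scoped RealInnerProductSpace ComplexConjugate

lemma image_le_of_hasDerivAt_le_mul_add_exp {E E' : ℝ → ℝ} {a b c B : ℝ}
    (hE : ∀ y ∈ Icc a b, HasDerivAt E (E' y) y)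
    (hE' : ∀ y ∈ Ioo a b, E' y ≤ c * E y + B * Real.exp (c * (y - a))) :
    ∀ x ∈ Icc a b, E x ≤ (E a + B * (x - a)) * Real.exp (c * (x - a)) := by
  set G : ℝ → ℝ := fun y => E y * Real.exp (-(c * (y - a)))
  have hG : ∀ y ∈ Icc a b,
      HasDerivAt G ((E' y - c * E y) * Real.exp (-(c * (y - a)))) y := fun y hy =>
    ((hE y hy).mul (((hasDerivAt_id' y).sub_const a).const_mul c).fun_neg.exp).congr_deriv
      (by ring)
  have hG' : ∀ y ∈ Ioo a b, (E' y - c * E y) * Real.exp (-(c * (y - a))) ≤ B := fun y hy =>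
    calc (E' y - c * E y) * Real.exp (-(c * (y - a)))
        ≤ B * Real.exp (c * (y - a)) * Real.exp (-(c * (y - a))) := by
          gcongr; linarith [hE' y hy]
      _ = B := by rw [mul_assoc, ← Real.exp_add, add_neg_cancel, Real.exp_zero, mul_one]
  intro x hx
  have hGx : G x - G a ≤ B * (x - a) := by
    refine (convex_Icc a b).image_sub_le_mul_sub_of_deriv_le
      (fun y hy => (hG y hy).continuousAt.continuousWithinAt) (fun y hy => ?_) (fun y hy => ?_)
      a (left_mem_Icc.2 (hx.1.trans hx.2)) x hx hx.1
    all_goals rw [interior_Icc] at hy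
    · exact (hG y (Ioo_subset_Icc_self hy)).differentiableAt.differentiableWithinAt
    · exact (hG y (Ioo_subset_Icc_self hy)).deriv ▸ hG' y hy
  calc E x = G x * Real.exp (c * (x - a)) := by
        simp only [G]; rw [mul_assoc, ← Real.exp_add, neg_add_cancel, Real.exp_zero, mul_one]
    _ ≤ (E a + B * (x - a)) * Real.exp (c * (x - a)) := by
        gcongr; linarith [show G a = E a by simp [G]]

lemma two_mul_energy_deriv_le (s u p w : ℂ) :
    2 * (‖s‖ ^ 2 * ⟪u, p⟫ + ⟪p, w - s ^ 2 * u⟫)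
      ≤ 2 * |s.im| * (‖s‖ ^ 2 * ‖u‖ ^ 2 + ‖p‖ ^ 2) + ‖p‖ ^ 2 + ‖w‖ ^ 2 := by
  set z := conj u * p * conj s
  -- `‖s‖² - conj s ^ 2 = 2i · Im s · conj s`, so the oscillating part only sees `Im s`.
  have hrot : ‖s‖ ^ 2 * ⟪u, p⟫ - ⟪p, s ^ 2 * u⟫ = -2 * s.im * z.im := by
    rw [Complex.sq_norm, Complex.normSq_apply]
    simp only [z, Complex.inner, mul_re, mul_im, conj_re, conj_im, pow_two]
    ring
  have hz : -2 * s.im * z.im ≤ 2 * |s.im| * (‖u‖ * ‖p‖ * ‖s‖) :=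
    calc -2 * s.im * z.im ≤ 2 * (|s.im| * |z.im|) := by
          rw [← abs_mul]; linarith [neg_abs_le (s.im * z.im)]
      _ ≤ 2 * (|s.im| * (‖u‖ * ‖p‖ * ‖s‖)) := by
          gcongr; exact (abs_im_le_norm z).trans_eq (by simp [z])
      _ = _ := by ring
  have hamgm := mul_le_mul_of_nonneg_left (two_mul_le_add_sq (‖s‖ * ‖u‖) ‖p‖) (abs_nonneg s.im)
  have hw : 2 * ⟪p, w⟫ ≤ ‖p‖ ^ 2 + ‖w‖ ^ 2 := by
    linarith [real_inner_le_norm p w, two_mul_le_add_sq ‖p‖ ‖w‖]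
  rw [inner_sub_right]
  linarith

lemma energy_le_of_hasDerivAt {a b B : ℝ} {s : ℂ} {u p w : ℝ → ℂ}
    (hu : ∀ y ∈ Icc a b, HasDerivAt u (p y) y)
    (hp : ∀ y ∈ Icc a b, HasDerivAt p (w y - s ^ 2 * u y) y)
    (hw : ∀ y ∈ Ioo a b,
      ‖w y‖ ^ 2 ≤ ‖s‖ ^ 2 * ‖u y‖ ^ 2 + B * Real.exp ((2 * |s.im| + 1) * (y - a))) :
    ∀ x ∈ Icc a b, ‖s‖ ^ 2 * ‖u x‖ ^ 2 + ‖p x‖ ^ 2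
      ≤ (‖s‖ ^ 2 * ‖u a‖ ^ 2 + ‖p a‖ ^ 2 + B * (x - a))
          * Real.exp ((2 * |s.im| + 1) * (x - a)) :=
  image_le_of_hasDerivAt_le_mul_add_exp
    (fun y hy => (((hu y hy).norm_sq.const_mul _).add (hp y hy).norm_sq).congr_deriv rfl)
    (fun y hy => by
      linarith [two_mul_energy_deriv_le s (u y) (p y) (w y), hw y hy])

lemma hasDerivAt_cos_mul_add_one (s : ℂ) (y : ℝ) :
    HasDerivAt (fun x : ℝ => cos (s * (x + 1))) (-sin (s * (y + 1)) * s) y := by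
  simpa using (((hasDerivAt_id (y : ℂ)).add_const 1).const_mul s).ccos.comp_ofReal

lemma hasDerivAt_sin_mul_add_one (s : ℂ) (y : ℝ) :
    HasDerivAt (fun x : ℝ => sin (s * (x + 1))) (cos (s * (y + 1)) * s) y := by
  simpa using (((hasDerivAt_id (y : ℂ)).add_const 1).const_mul s).csin.comp_ofReal

section Potential

variable {q : ℝ → ℝ} {s : ℂ} {u u' : ℝ → ℂ}

lemma norm_sq_le_of_abs_potential_le_norm
    (hu : ∀ y ∈ Icc (-1 : ℝ) 1, HasDerivAt u (u' y) y)
    (hu' : ∀ y ∈ Icc (-1 : ℝ) 1, HasDerivAt u' (q y * u y - s ^ 2 * u y) y)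
    (hq : ∀ y ∈ Icc (-1 : ℝ) 1, |q y| ≤ ‖s‖) (hs : 1 ≤ ‖s‖) :
    ∀ x ∈ Icc (-1 : ℝ) 1,
      ‖u x‖ ^ 2 ≤ (‖u (-1)‖ ^ 2 + ‖u' (-1)‖ ^ 2) * Real.exp ((2 * |s.im| + 1) * (x + 1)) := by
  have hw : ∀ y ∈ Ioo (-1 : ℝ) 1, ‖(q y : ℂ) * u y‖ ^ 2
      ≤ ‖s‖ ^ 2 * ‖u y‖ ^ 2 + 0 * Real.exp ((2 * |s.im| + 1) * (y - -1)) := fun y hy => by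
    rw [zero_mul, add_zero, norm_mul, mul_pow, Complex.norm_real, Real.norm_eq_abs]
    gcongr
    exact hq y (Ioo_subset_Icc_self hy)
  intro x hx
  have hE := energy_le_of_hasDerivAt hu hu' hw x hx
  rw [zero_mul, add_zero, sub_neg_eq_add] at hE
  have hs2 : 1 ≤ ‖s‖ ^ 2 := one_le_pow₀ hs
  refine le_of_mul_le_mul_left ?_ (zero_lt_one.trans_le hs2)
  calc ‖s‖ ^ 2 * ‖u x‖ ^ 2 ≤ (‖s‖ ^ 2 * ‖u (-1)‖ ^ 2 + ‖u' (-1)‖ ^ 2)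
        * Real.exp ((2 * |s.im| + 1) * (x + 1)) := by linarith [sq_nonneg ‖u' x‖]
    _ ≤ ‖s‖ ^ 2
        * ((‖u (-1)‖ ^ 2 + ‖u' (-1)‖ ^ 2) * Real.exp ((2 * |s.im| + 1) * (x + 1))) := by
        rw [← mul_assoc]; gcongr
        linarith [mul_le_mul_of_nonneg_right hs2 (sq_nonneg ‖u' (-1)‖)]

lemma norm_sq_sub_cos_le {M : ℝ} (hu : ∀ y ∈ Icc (-1 : ℝ) 1, HasDerivAt u (u' y) y)
    (hu' : ∀ y ∈ Icc (-1 : ℝ) 1, HasDerivAt u' (q y * u y - s ^ 2 * u y) y)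
    (hq : ∀ y ∈ Icc (-1 : ℝ) 1, |q y| ≤ M) (hM : M ≤ ‖s‖) (hs : 1 ≤ ‖s‖) :
    ∀ x ∈ Icc (-1 : ℝ) 1, ‖s‖ ^ 2 * ‖u x - u (-1) * cos (s * (x + 1))‖ ^ 2
      ≤ (‖u' (-1)‖ ^ 2 + 2 * M ^ 2 * (‖u (-1)‖ ^ 2 + ‖u' (-1)‖ ^ 2))
          * Real.exp ((2 * |s.im| + 1) * (x + 1)) := by
  set K := ‖u (-1)‖ ^ 2 + ‖u' (-1)‖ ^ 2
  have hK := norm_sq_le_of_abs_potential_le_norm hu hu'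
    (fun y hy => (hq y hy).trans hM) hs
  have hf : ∀ y ∈ Icc (-1 : ℝ) 1, HasDerivAt (fun x => u x - u (-1) * cos (s * (x + 1)))
      (u' y + u (-1) * s * sin (s * (y + 1))) y := fun y hy =>
    ((hu y hy).sub ((hasDerivAt_cos_mul_add_one s y).const_mul _)).congr_deriv (by ring)
  have hf' : ∀ y ∈ Icc (-1 : ℝ) 1, HasDerivAt (fun x => u' x + u (-1) * s * sin (s * (x + 1)))
      (q y * u y - s ^ 2 * (u y - u (-1) * cos (s * (y + 1)))) y := fun y hy =>
    ((hu' y hy).add ((hasDerivAt_sin_mul_add_one s y).const_mul _)).congr_deriv (by ring)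
  have hw : ∀ y ∈ Ioo (-1 : ℝ) 1, ‖(q y : ℂ) * u y‖ ^ 2
      ≤ ‖s‖ ^ 2 * ‖u y - u (-1) * cos (s * (y + 1))‖ ^ 2
        + M ^ 2 * K * Real.exp ((2 * |s.im| + 1) * (y - -1)) := fun y hy => by
    have hy' := Ioo_subset_Icc_self hy
    calc ‖(q y : ℂ) * u y‖ ^ 2 = |q y| ^ 2 * ‖u y‖ ^ 2 := by
          rw [norm_mul, mul_pow, Complex.norm_real, Real.norm_eq_abs]
      _ ≤ M ^ 2 * (K * Real.exp ((2 * |s.im| + 1) * (y - -1))) := by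
          rw [sub_neg_eq_add]; gcongr; exacts [hq y hy', hK y hy']
      _ ≤ _ := by rw [← mul_assoc]; exact le_add_of_nonneg_left (by positivity)
  intro x hx
  have hE := energy_le_of_hasDerivAt hf hf' hw x hx
  have hcos : cos (s * (((-1 : ℝ) : ℂ) + 1)) = 1 := by simp
  have hsin : sin (s * (((-1 : ℝ) : ℂ) + 1)) = 0 := by simp
  rw [hcos, hsin, mul_one, sub_self, norm_zero, mul_zero, add_zero, sub_neg_eq_add] at hE
  have hx2 : M ^ 2 * K * (x + 1) ≤ M ^ 2 * K * 2 := by gcongr; linarith [hx.2]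
  calc _ ≤ (‖s‖ ^ 2 * 0 ^ 2 + ‖u' (-1)‖ ^ 2 + M ^ 2 * K * (x + 1))
        * Real.exp ((2 * |s.im| + 1) * (x + 1)) :=
          le_of_add_le_of_nonneg_left hE (sq_nonneg _)
    _ ≤ _ := by gcongr ?_ * _; linarith

lemma norm_sub_cos_le {M : ℝ} (hu : ∀ y ∈ Icc (-1 : ℝ) 1, HasDerivAt u (u' y) y)
    (hu' : ∀ y ∈ Icc (-1 : ℝ) 1, HasDerivAt u' (q y * u y - s ^ 2 * u y) y)
    (hq : ∀ y ∈ Icc (-1 : ℝ) 1, |q y| ≤ M) (hM : M ≤ ‖s‖) (hs : 1 ≤ ‖s‖) :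
    ∀ x ∈ Icc (-1 : ℝ) 1, ‖u x - u (-1) * cos (s * (x + 1))‖
      ≤ Real.sqrt ((‖u' (-1)‖ ^ 2 + 2 * M ^ 2 * (‖u (-1)‖ ^ 2 + ‖u' (-1)‖ ^ 2)) * Real.exp 2)
          * ‖s‖⁻¹ * Real.exp (|s.im| * (x + 1)) := by
  intro x hx
  set K := ‖u' (-1)‖ ^ 2 + 2 * M ^ 2 * (‖u (-1)‖ ^ 2 + ‖u' (-1)‖ ^ 2)
  have hexp : Real.exp ((2 * |s.im| + 1) * (x + 1))
      ≤ Real.exp 2 * Real.exp (|s.im| * (x + 1)) ^ 2 := by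
    rw [sq, ← Real.exp_add, ← Real.exp_add]
    exact Real.exp_le_exp.2 (by nlinarith [hx.2])
  have hsq : (‖s‖ * ‖u x - u (-1) * cos (s * (x + 1))‖) ^ 2
      ≤ (Real.sqrt (K * Real.exp 2) * Real.exp (|s.im| * (x + 1))) ^ 2 := by
    rw [mul_pow, mul_pow, Real.sq_sqrt (by positivity), mul_assoc]
    exact (norm_sq_sub_cos_le hu hu' hq hM hs x hx).trans (by gcongr)
  rw [mul_right_comm, ← div_eq_mul_inv, le_div_iff₀ (by linarith), mul_comm]
  exact (pow_le_pow_iff_left₀ (by positivity) (by positivity) two_ne_zero).1 hsq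

end Potential

theorem solution_asymptotics_alpha2_ne_zero_general
    (q : ℝ → ℝ) (hq : ContinuousOn q (Set.Icc (-1) 1))
    (α₁ α₂ : ℝ)
    (φ φ' φ'' : ℂ → ℝ → ℂ)
    (hφ : ∀ s, ∀ x ∈ Set.Icc (-1:ℝ) 1, HasDerivAt (φ s) (φ' s x) x)
    (hφ' : ∀ s, ∀ x ∈ Set.Icc (-1:ℝ) 1, HasDerivAt (φ' s) (φ'' s x) x)
    (hode : ∀ s, ∀ x ∈ Set.Icc (-1:ℝ) 1,
      -φ'' s x + (q x : ℂ) * φ s x = s ^ 2 * φ s x)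
    (hinit : ∀ s, φ s (-1) = (α₂ : ℂ)) (hinit' : ∀ s, φ' s (-1) = -(α₁ : ℂ)) :
    ∃ C S₀ : ℝ, 0 < C ∧ 0 < S₀ ∧
      ∀ s : ℂ, S₀ ≤ ‖s‖ → ∀ x ∈ Set.Icc (-1:ℝ) 1,
        ‖φ s x - (α₂ : ℂ) * Complex.cos (s * (x + 1))‖
          ≤ C * ‖s‖⁻¹ * Real.exp (|s.im| * (x + 1)) := by
  obtain ⟨M, hM⟩ := isCompact_Icc.exists_bound_of_continuousOn hq
  set C := Real.sqrt ((α₁ ^ 2 + 2 * M ^ 2 * (α₂ ^ 2 + α₁ ^ 2)) * Real.exp 2)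
  refine ⟨C + 1, max M 1, by positivity, by positivity, fun s hs x hx => ?_⟩
  have hφ'' : ∀ y ∈ Icc (-1 : ℝ) 1, HasDerivAt (φ' s) (q y * φ s y - s ^ 2 * φ s y) y :=
    fun y hy => (hφ' s y hy).congr_deriv (by linear_combination -hode s y hy)
  have h := norm_sub_cos_le (hφ s) hφ'' (fun y hy => Real.norm_eq_abs (q y) ▸ hM y hy)
    (le_of_max_le_left hs) (le_of_max_le_right hs) x hx
  simp only [hinit, hinit', norm_neg, Complex.norm_real, Real.norm_eq_abs, sq_abs] at h
  exact h.trans (by gcongr; linarith)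

/-- Asymptotics of the fundamental solution when `α₂ ≠ 0`: if for each `s` the
function `φ s` solves `−u'' + qu = s²u` with `φ(−1) = α₂`, `φ'(−1) = −α₁`,
then `φ(x) = α₂ cos(s(x+1)) + O(|s|⁻¹ e^{|Im s|(x+1)})` uniformly on `[−1,1]`. -/
theorem solution_asymptotics_alpha2_ne_zero
    (q : ℝ → ℝ) (hq : ContinuousOn q (Set.Icc (-1) 1))
    (α₁ α₂ : ℝ) (hα₂ : α₂ ≠ 0)
    (φ φ' φ'' : ℂ → ℝ → ℂ)
    (hφ : ∀ s, ∀ x ∈ Set.Icc (-1:ℝ) 1, HasDerivAt (φ s) (φ' s x) x)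
    (hφ' : ∀ s, ∀ x ∈ Set.Icc (-1:ℝ) 1, HasDerivAt (φ' s) (φ'' s x) x)
    (hode : ∀ s, ∀ x ∈ Set.Icc (-1:ℝ) 1,
      -φ'' s x + (q x : ℂ) * φ s x = s ^ 2 * φ s x)
    (hinit : ∀ s, φ s (-1) = (α₂ : ℂ)) (hinit' : ∀ s, φ' s (-1) = -(α₁ : ℂ)) :
    ∃ C S₀ : ℝ, 0 < C ∧ 0 < S₀ ∧
      ∀ s : ℂ, S₀ ≤ ‖s‖ → ∀ x ∈ Set.Icc (-1:ℝ) 1,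
        ‖φ s x - (α₂ : ℂ) * Complex.cos (s * (x + 1))‖
          ≤ C * ‖s‖⁻¹ * Real.exp (|s.im| * (x + 1)) :=
  solution_asymptotics_alpha2_ne_zero_general q hq α₁ α₂ φ φ' φ'' hφ hφ' hode hinit hinit'
end

section
/- Let q be continuous on [−1,1], s ∈ ℂ with t = Im s, and φ the solution of −u'' + qu = s²u with φ(−1) = 0, φ'(−1) = −α₁, α₁ ≠ 0. Then there exist constants C, S₀ > 0 such that for all |s| ≥ S₀ and all x ∈ [−1,1]: |φ(x) + (α₁/s) sin(s(x+1))| ≤ C·|s|⁻²·e^{|t|(x+1)}. -/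
/-!
Variation of constants turns the equation into the Volterra integral equation
`φ(x) = -(α₁/s) sin(s(x+1)) + s⁻¹ ∫_{-1}^x q(τ) φ(τ) sin(s(x-τ)) dτ`.
Since `|sin z| ≤ e^{|Im z|}`, the best constant `K` with `|φ(τ)| ≤ K e^{|t|(τ+1)}` satisfies
`K ≤ |α₁|/|s| + 2‖q‖∞ K/|s|`, hence `K ≤ 2|α₁|/|s|` once `|s| ≥ 4‖q‖∞`. Feeding this bound
back into the integral term gives the remainder `O(|s|⁻² e^{|t|(x+1)})`.
-/

open Complex Set

theorem Complex.norm_sin_le_exp_abs_im (z : ℂ) : ‖sin z‖ ≤ Real.exp |z.im| := by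
  have h_exp_le : ∀ w : ℂ, ‖exp (w * I)‖ ≤ Real.exp |w.im| := fun w => by
    simpa [norm_exp] using neg_le_abs w.im
  calc ‖sin z‖ = ‖exp (-z * I) - exp (z * I)‖ / 2 := by
        rw [sin, norm_div, norm_mul]; simp
    _ ≤ (Real.exp |z.im| + Real.exp |z.im|) / 2 := by
        gcongr
        simpa using (norm_sub_le _ _).trans (add_le_add (h_exp_le (-z)) (h_exp_le z))
    _ = Real.exp |z.im| := by ring

theorem Complex.norm_sin_mul_ofReal_le (s : ℂ) {y : ℝ} (hy : 0 ≤ y) :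
    ‖sin (s * y)‖ ≤ Real.exp (|s.im| * y) := by
  simpa [abs_mul, abs_of_nonneg hy] using norm_sin_le_exp_abs_im (s * y)

structure IsSchrodingerSolutionOn (Q : ℝ → ℂ) (s : ℂ) (a b : ℝ) (f f' : ℝ → ℂ) : Prop where
  hasDerivAt : ∀ x ∈ Icc a b, HasDerivAt f (f' x) x
  hasDerivAt_deriv : ∀ x ∈ Icc a b, HasDerivAt f' ((Q x - s ^ 2) * f x) x

namespace IsSchrodingerSolutionOn

variable {Q : ℝ → ℂ} {s : ℂ} {a b : ℝ} {f f' : ℝ → ℂ}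

theorem continuousOn (h : IsSchrodingerSolutionOn Q s a b f f') : ContinuousOn f (Icc a b) :=
  fun x hx => (h.hasDerivAt x hx).continuousAt.continuousWithinAt

theorem sub_sin_eq_integral (h : IsSchrodingerSolutionOn Q s a b f f')
    (hQ : ContinuousOn Q (Icc a b)) (hs : s ≠ 0) (ha : f a = 0) {x : ℝ} (hx : x ∈ Icc a b) :
    f x - f' a / s * sin (s * (x - a)) =
      s⁻¹ * ∫ τ in a..x, Q τ * f τ * sin (s * (x - τ)) := by
  have hsub : Icc a x ⊆ Icc a b := Icc_subset_Icc le_rfl hx.2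
  have hkernel : ∀ τ : ℝ, HasDerivAt (fun w : ℂ => s * (x - w)) (-s) τ := fun τ => by
    simpa using ((hasDerivAt_id (τ : ℂ)).const_sub (x : ℂ)).const_mul s
  have hF : ∀ τ ∈ uIcc a x, HasDerivAt
      (fun τ : ℝ => f' τ * sin (s * (x - τ)) / s + f τ * cos (s * (x - τ)))
      (Q τ * f τ * sin (s * (x - τ)) / s) τ := by
    intro τ hτ
    rw [uIcc_of_le hx.1] at hτ
    have hτ' := hsub hτ
    refine ((((h.hasDerivAt_deriv τ hτ').mul (hkernel τ).csin.comp_ofReal).div_const s).add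
      ((h.hasDerivAt τ hτ').mul (hkernel τ).ccos.comp_ofReal)).congr_deriv ?_
    field_simp
    ring
  have hint : IntervalIntegrable (fun τ => Q τ * f τ * sin (s * (x - τ)) / s)
      MeasureTheory.volume a x := by
    refine ContinuousOn.intervalIntegrable ?_
    rw [uIcc_of_le hx.1]
    exact (((hQ.mono hsub).mul (h.continuousOn.mono hsub)).mul
      (by fun_prop : Continuous fun τ : ℝ => sin (s * (x - τ))).continuousOn).div_const s
  have hFTC := intervalIntegral.integral_eq_sub_of_hasDerivAt hF hint
  simp only [sub_self, mul_zero, sin_zero, cos_zero, zero_div, zero_add, mul_one, ha,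
    zero_mul, add_zero, intervalIntegral.integral_div] at hFTC
  rw [inv_mul_eq_div, hFTC]
  ring

theorem norm_sub_sin_le_of_norm_le (h : IsSchrodingerSolutionOn Q s a b f f')
    (hQ : ContinuousOn Q (Icc a b)) (hs : s ≠ 0) (ha : f a = 0) {M K : ℝ}
    (hM : ∀ τ ∈ Icc a b, ‖Q τ‖ ≤ M) (hK : ∀ τ ∈ Icc a b, ‖f τ‖ ≤ K * Real.exp (|s.im| * (τ - a)))
    {x : ℝ} (hx : x ∈ Icc a b) :
    ‖f x - f' a / s * sin (s * (x - a))‖ ≤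
      ‖s‖⁻¹ * (M * K * (x - a)) * Real.exp (|s.im| * (x - a)) := by
  have hM₀ : 0 ≤ M := (norm_nonneg _).trans (hM a ⟨le_rfl, hx.1.trans hx.2⟩)
  have hintegrand : ∀ τ ∈ uIoc a x,
      ‖Q τ * f τ * sin (s * (x - τ))‖ ≤ M * K * Real.exp (|s.im| * (x - a)) := by
    intro τ hτ
    rw [uIoc_of_le hx.1] at hτ
    have hτ' : τ ∈ Icc a b := ⟨hτ.1.le, hτ.2.trans hx.2⟩
    have hsin := norm_sin_mul_ofReal_le s (sub_nonneg.2 hτ.2)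
    push_cast at hsin
    calc ‖Q τ * f τ * sin (s * (x - τ))‖ = ‖Q τ‖ * ‖f τ‖ * ‖sin (s * (x - τ))‖ := by
          rw [norm_mul, norm_mul]
      _ ≤ M * (K * Real.exp (|s.im| * (τ - a))) * Real.exp (|s.im| * (x - τ)) := by
          gcongr
          · exact mul_nonneg hM₀ ((norm_nonneg _).trans (hK τ hτ'))
          · exact hM τ hτ'
          · exact hK τ hτ'
      _ = M * K * Real.exp (|s.im| * (x - a)) := by
          rw [mul_assoc M, mul_assoc, ← Real.exp_add]
          ring_nf
  have hintegral := intervalIntegral.norm_integral_le_of_norm_le_const hintegrand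
  rw [abs_of_nonneg (sub_nonneg.2 hx.1)] at hintegral
  rw [h.sub_sin_eq_integral hQ hs ha hx, norm_mul, norm_inv]
  calc ‖s‖⁻¹ * ‖∫ τ in a..x, Q τ * f τ * sin (s * (x - τ))‖
      ≤ ‖s‖⁻¹ * (M * K * Real.exp (|s.im| * (x - a)) * (x - a)) := by gcongr
    _ = _ := by ring

theorem norm_le_mul_exp (h : IsSchrodingerSolutionOn Q s a b f f') (hQ : ContinuousOn Q (Icc a b))
    (hs : s ≠ 0) (ha : f a = 0) (hab : a ≤ b) {M : ℝ} (hM : ∀ τ ∈ Icc a b, ‖Q τ‖ ≤ M)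
    (hsM : 2 * (b - a) * M ≤ ‖s‖) :
    ∀ τ ∈ Icc a b, ‖f τ‖ ≤ 2 * ‖f' a‖ * ‖s‖⁻¹ * Real.exp (|s.im| * (τ - a)) := by
  set t := |s.im|
  have hM₀ : 0 ≤ M := (norm_nonneg _).trans (hM a ⟨le_rfl, hab⟩)
  have hs₀ : 0 < ‖s‖ := norm_pos_iff.2 hs
  -- `K` is the smallest constant with `‖f τ‖ ≤ K * exp (t * (τ - a))` on `[a, b]`
  obtain ⟨x₀, hx₀, hmax⟩ := isCompact_Icc.exists_isMaxOn (nonempty_Icc.2 hab)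
    (h.continuousOn.norm.mul
      (by fun_prop : Continuous fun τ => Real.exp (-(t * (τ - a)))).continuousOn)
  set K := ‖f x₀‖ * Real.exp (-(t * (x₀ - a)))
  have hK : ∀ τ ∈ Icc a b, ‖f τ‖ ≤ K * Real.exp (t * (τ - a)) := fun τ hτ => by
    rw [← mul_one ‖f τ‖, ← Real.exp_zero, ← neg_add_cancel (t * (τ - a)), Real.exp_add,
      ← mul_assoc]
    exact mul_le_mul_of_nonneg_right (hmax hτ) (Real.exp_pos _).le
  have hfx₀ : ‖f x₀‖ = K * Real.exp (t * (x₀ - a)) := by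
    simp [K, mul_assoc, ← Real.exp_add]
  have hsin : ‖f' a / s * sin (s * (x₀ - a))‖ ≤ ‖f' a‖ * ‖s‖⁻¹ * Real.exp (t * (x₀ - a)) := by
    have := norm_sin_mul_ofReal_le s (sub_nonneg.2 hx₀.1)
    push_cast at this
    rw [norm_mul, norm_div, div_eq_mul_inv]
    gcongr
  have hself : K * Real.exp (t * (x₀ - a)) ≤
      (‖s‖⁻¹ * (M * K * (x₀ - a)) + ‖f' a‖ * ‖s‖⁻¹) * Real.exp (t * (x₀ - a)) := by
    rw [← hfx₀, add_mul]
    calc ‖f x₀‖ ≤ ‖f x₀ - f' a / s * sin (s * (x₀ - a))‖ + ‖f' a / s * sin (s * (x₀ - a))‖ :=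
          norm_le_norm_sub_add _ _
      _ ≤ _ := add_le_add (h.norm_sub_sin_le_of_norm_le hQ hs ha hM hK hx₀) hsin
  have hK_le : K ≤ ‖s‖⁻¹ * (M * K * (x₀ - a)) + ‖f' a‖ * ‖s‖⁻¹ :=
    le_of_mul_le_mul_right hself (Real.exp_pos _)
  have hhalf : ‖s‖⁻¹ * (M * K * (x₀ - a)) ≤ K / 2 := by
    have hK₀ : 0 ≤ K := by positivity
    rw [inv_mul_le_iff₀ hs₀]
    nlinarith [mul_le_mul_of_nonneg_right hsM hK₀, hx₀.2,
      mul_nonneg (mul_nonneg hM₀ hK₀) (sub_nonneg.2 hx₀.2)]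
  intro τ hτ
  calc ‖f τ‖ ≤ K * Real.exp (t * (τ - a)) := hK τ hτ
    _ ≤ 2 * ‖f' a‖ * ‖s‖⁻¹ * Real.exp (t * (τ - a)) := by gcongr; linarith

theorem norm_sub_sin_le (h : IsSchrodingerSolutionOn Q s a b f f')
    (hQ : ContinuousOn Q (Icc a b)) (hs : s ≠ 0) (ha : f a = 0) {M : ℝ}
    (hM : ∀ τ ∈ Icc a b, ‖Q τ‖ ≤ M) (hsM : 2 * (b - a) * M ≤ ‖s‖) {x : ℝ} (hx : x ∈ Icc a b) :
    ‖f x - f' a / s * sin (s * (x - a))‖ ≤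
      2 * (b - a) * M * ‖f' a‖ * ‖s‖⁻¹ ^ 2 * Real.exp (|s.im| * (x - a)) := by
  have hab : a ≤ b := hx.1.trans hx.2
  have hM₀ : 0 ≤ M := (norm_nonneg _).trans (hM a ⟨le_rfl, hab⟩)
  calc _ ≤ ‖s‖⁻¹ * (M * (2 * ‖f' a‖ * ‖s‖⁻¹) * (x - a)) * Real.exp (|s.im| * (x - a)) :=
        h.norm_sub_sin_le_of_norm_le hQ hs ha hM (h.norm_le_mul_exp hQ hs ha hab hM hsM) hx
    _ ≤ ‖s‖⁻¹ * (M * (2 * ‖f' a‖ * ‖s‖⁻¹) * (b - a)) * Real.exp (|s.im| * (x - a)) := by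
        gcongr; exact hx.2
    _ = _ := by ring

end IsSchrodingerSolutionOn

theorem solution_asymptotics_alpha2_eq_zero_general
    (q : ℝ → ℝ) (hq : ContinuousOn q (Set.Icc (-1) 1))
    (α₁ : ℝ)
    (φ φ' φ'' : ℂ → ℝ → ℂ)
    (hφ : ∀ s, ∀ x ∈ Set.Icc (-1:ℝ) 1, HasDerivAt (φ s) (φ' s x) x)
    (hφ' : ∀ s, ∀ x ∈ Set.Icc (-1:ℝ) 1, HasDerivAt (φ' s) (φ'' s x) x)
    (hode : ∀ s, ∀ x ∈ Set.Icc (-1:ℝ) 1,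
      -φ'' s x + (q x : ℂ) * φ s x = s ^ 2 * φ s x)
    (hinit : ∀ s, φ s (-1) = 0) (hinit' : ∀ s, φ' s (-1) = -(α₁ : ℂ)) :
    ∃ C S₀ : ℝ, 0 < C ∧ 0 < S₀ ∧
      ∀ s : ℂ, S₀ ≤ ‖s‖ → ∀ x ∈ Set.Icc (-1:ℝ) 1,
        ‖φ s x + ((α₁ : ℂ) / s) * Complex.sin (s * (x + 1))‖
          ≤ C * (‖s‖⁻¹) ^ 2 * Real.exp (|s.im| * (x + 1)) := by
  have hQ : ContinuousOn (fun x => (q x : ℂ)) (Icc (-1) 1) :=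
    continuous_ofReal.comp_continuousOn hq
  obtain ⟨M, hM⟩ := isCompact_Icc.exists_bound_of_continuousOn hQ
  have hM₀ : 0 ≤ M := (norm_nonneg _).trans (hM 0 (by norm_num))
  refine ⟨4 * M * |α₁| + 1, 4 * M + 1, by positivity, by positivity, fun s hs x hx => ?_⟩
  have hs₀ : s ≠ 0 := norm_pos_iff.1 (by linarith)
  have hsol : IsSchrodingerSolutionOn (fun x => (q x : ℂ)) s (-1) 1 (φ s) (φ' s) :=
    ⟨hφ s, fun x hx => (hφ' s x hx).congr_deriv (by linear_combination -hode s x hx)⟩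
  have key := hsol.norm_sub_sin_le hQ hs₀ (hinit s) hM (by linarith) hx
  simp only [hinit', norm_neg, norm_real, Real.norm_eq_abs, ofReal_neg, ofReal_one,
    sub_neg_eq_add, neg_div, neg_mul] at key
  calc _ ≤ 2 * (1 + 1) * M * |α₁| * ‖s‖⁻¹ ^ 2 * Real.exp (|s.im| * (x + 1)) := key
    _ ≤ _ := by gcongr; linarith

/-- Asymptotics of the fundamental solution when `α₂ = 0`, `α₁ ≠ 0`: if for
each `s` the function `φ s` solves `−u'' + qu = s²u` with `φ(−1) = 0`,
`φ'(−1) = −α₁`, then `φ(x) = −(α₁/s) sin(s(x+1)) + O(|s|⁻² e^{|Im s|(x+1)})`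
uniformly on `[−1,1]`. -/
theorem solution_asymptotics_alpha2_eq_zero
    (q : ℝ → ℝ) (hq : ContinuousOn q (Set.Icc (-1) 1))
    (α₁ : ℝ) (hα₁ : α₁ ≠ 0)
    (φ φ' φ'' : ℂ → ℝ → ℂ)
    (hφ : ∀ s, ∀ x ∈ Set.Icc (-1:ℝ) 1, HasDerivAt (φ s) (φ' s x) x)
    (hφ' : ∀ s, ∀ x ∈ Set.Icc (-1:ℝ) 1, HasDerivAt (φ' s) (φ'' s x) x)
    (hode : ∀ s, ∀ x ∈ Set.Icc (-1:ℝ) 1,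
      -φ'' s x + (q x : ℂ) * φ s x = s ^ 2 * φ s x)
    (hinit : ∀ s, φ s (-1) = 0) (hinit' : ∀ s, φ' s (-1) = -(α₁ : ℂ)) :
    ∃ C S₀ : ℝ, 0 < C ∧ 0 < S₀ ∧
      ∀ s : ℂ, S₀ ≤ ‖s‖ → ∀ x ∈ Set.Icc (-1:ℝ) 1,
        ‖φ s x + ((α₁ : ℂ) / s) * Complex.sin (s * (x + 1))‖
          ≤ C * (‖s‖⁻¹) ^ 2 * Real.exp (|s.im| * (x + 1)) :=
  solution_asymptotics_alpha2_eq_zero_general q hq α₁ φ φ' φ'' hφ hφ' hode hinit hinit'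
end
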